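/- Suppose x, y > 0, w is odd, and the two-coloured quantum integers satisfy p^x_{w+1}(x,y) = p^y_{w+1}(x,y) = 1 with all intermediate values positive. Then xy = (2cos(π/(w+3)))², and conversely for any x,y > 0 with xy = (2cos(π/(w+3)))² these conditions hold; explicitly p^x_n = [n+1]_h for n even and p^x_n = x·[n+1]_h/[2]_h for n odd, where h = w+3 and [k]_h = sin(kπ/h)/sin(π/h). -/

import Mathlib

/-!
With `xy = (2c)²` and `c ≠ 0`, the even terms `p^x_{2m} = p^y_{2m}` and the rescaled odd terms
`2c·p^x_{2m+1}/x = 2c·p^y_{2m+1}/y` interleave into one sequence obeying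
`s_{n+2} = 2c·s_{n+1} - s_n`, `s_0 = 1`, `s_1 = 2c`: the Chebyshev values `U_n(c)`. For odd `w` the
frieze conditions therefore say `U_{w+1}(c) = 1` and `U_n(c) > 0` for `1 ≤ n ≤ w`, with `c = √(xy)/2`.
If `c ≥ 1` then `U_n(c) ≥ n + 1`, which is too big. Otherwise `c = cos θ` with `0 < θ < π` and
`U_n(cos θ) = sin((n+1)θ)/sin θ`; positivity forces `(w+2)θ < π`, and then `sin((w+2)θ) = sin θ`
forces `θ = π/(w+3)`. At this angle the Chebyshev values are the quantum integers `[n+1]_{w+3}`.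
-/

open Real

/-- The pair of two-coloured quantum integers `tc x y n = (p^x_n, p^y_n)`. -/
def tc (x y : ℝ) : ℕ → ℝ × ℝ
  | 0 => (1, 1)
  | 1 => (x, y)
  | n + 2 => (x * (tc x y (n + 1)).2 - (tc x y n).1,
              y * (tc x y (n + 1)).1 - (tc x y n).2)

def px (x y : ℝ) (n : ℕ) : ℝ := (tc x y n).1
def py (x y : ℝ) (n : ℕ) : ℝ := (tc x y n).2

/-- Quantum integer `[k]_h = sin(kπ/h)/sin(π/h)`. -/
noncomputable def qint (h k : ℕ) : ℝ := sin (k * π / h) / sin (π / h)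

open Polynomial
open Polynomial.Chebyshev

theorem U_eval_nat_add_two {R : Type*} [CommRing R] (n : ℕ) (c : R) :
    (U R (n + 2 : ℕ)).eval c = 2 * c * (U R (n + 1 : ℕ)).eval c - (U R n).eval c := by
  push_cast
  simp [U_add_two]

theorem nat_add_one_le_U_eval {c : ℝ} (hc : 1 ≤ c) (n : ℕ) : (n : ℝ) + 1 ≤ (U ℝ n).eval c := by
  suffices ∀ n : ℕ, (n : ℝ) + 1 ≤ (U ℝ n).eval c ∧
      (U ℝ n).eval c + 1 ≤ (U ℝ (n + 1 : ℕ)).eval c from (this n).1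
  intro n
  induction n with
  | zero => norm_num [U_one]; linarith
  | succ n ih =>
    refine ⟨by push_cast at ih ⊢; linarith [ih.2], ?_⟩
    rw [U_eval_nat_add_two]
    nlinarith [ih.1, ih.2]

theorem U_real_cos_eq_div {θ : ℝ} (hθ : sin θ ≠ 0) (n : ℤ) :
    (U ℝ n).eval (cos θ) = sin ((n + 1) * θ) / sin θ :=
  eq_div_of_mul_eq hθ (U_real_cos θ n)

theorem nat_mul_lt_pi_of_sin_pos {θ : ℝ} (hθ : θ ≤ π) {m : ℕ}
    (hpos : ∀ k : ℕ, 1 ≤ k → k ≤ m → 0 < sin (k * θ)) : m * θ < π := by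
  induction m with
  | zero => simpa using pi_pos
  | succ m ih =>
    have hm : m * θ < π := ih fun k hk hkm => hpos k hk (by omega)
    by_contra! hge
    have hsin : 0 ≤ sin ((m + 1 : ℕ) * θ - π) := by
      apply sin_nonneg_of_nonneg_of_le_pi <;> push_cast at hge ⊢ <;> linarith
    rw [sin_sub_pi] at hsin
    linarith [hpos (m + 1) le_add_self le_rfl]

theorem eq_pi_div_of_sin_mul_eq_sin {θ : ℝ} (h0 : 0 < θ) (hπ : θ < π) {m : ℕ} (hm : 1 ≤ m)
    (hpos : ∀ k : ℕ, 1 ≤ k → k ≤ m → 0 < sin (k * θ)) (heq : sin ((m + 1) * θ) = sin θ) :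
    θ = π / (m + 2) := by
  have hlt : ((m + 1 : ℕ) : ℝ) * θ < π := by
    refine nat_mul_lt_pi_of_sin_pos hπ.le fun k hk hkm => ?_
    rcases hkm.lt_or_eq with hkm | rfl
    · exact hpos k hk (by omega)
    · push_cast; rw [heq]; exact sin_pos_of_pos_of_lt_pi h0 hπ
  push_cast at hlt
  -- `(m + 1) θ < π` rules out `(m + 1) θ ≡ θ (mod 2π)` and leaves `(m + 2) θ = π`.
  have hm' : (1 : ℝ) ≤ m := by exact_mod_cast hm
  obtain ⟨k, hk | hk⟩ := sin_eq_sin_iff.mp heq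
  · have : -1 < (k : ℝ) ∧ (k : ℝ) < 0 := by constructor <;> nlinarith [pi_pos]
    have : -1 < k ∧ k < 0 := by exact_mod_cast this
    omega
  · have : -1 < (k : ℝ) ∧ (k : ℝ) < 1 := by constructor <;> nlinarith [pi_pos]
    obtain rfl : k = 0 := by
      have : -1 < k ∧ k < 1 := by exact_mod_cast this
      omega
    rw [eq_div_iff (by positivity)]
    push_cast at hk
    linarith

theorem eq_cos_pi_div_of_U_eval {m : ℕ} {c : ℝ} (hone : (U ℝ (m + 1 : ℕ)).eval c = 1)
    (hpos : ∀ n : ℕ, 1 ≤ n → n ≤ m → 0 < (U ℝ n).eval c) : c = cos (π / (m + 3)) := by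
  have hc1 : c < 1 := by
    by_contra! hc
    have := nat_add_one_le_U_eval hc (m + 1)
    push_cast at hone this
    linarith [(Nat.cast_nonneg m : (0 : ℝ) ≤ m)]
  have hcm1 : -1 < c := by
    rcases m.eq_zero_or_pos with rfl | hm
    · norm_num [U_one] at hone
      linarith
    · have := hpos 1 le_rfl hm
      norm_num [U_one] at this
      linarith
  obtain ⟨θ, hθ0, hθπ, rfl⟩ : ∃ θ, 0 < θ ∧ θ < π ∧ cos θ = c :=
    ⟨arccos c, arccos_pos.mpr hc1, arccos_lt_pi.mpr hcm1, cos_arccos hcm1.le hc1.le⟩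
  have hsin : 0 < sin θ := sin_pos_of_pos_of_lt_pi hθ0 hθπ
  rw [U_real_cos_eq_div hsin.ne'] at hone
  congr 1
  have := eq_pi_div_of_sin_mul_eq_sin hθ0 hθπ (Nat.le_add_left 1 m) (fun k hk hkm => ?_) ?_
  · push_cast at this
    rw [this]
    ring
  · rcases hk.eq_or_lt with rfl | hk
    · simpa using hsin
    · obtain ⟨n, rfl⟩ := Nat.exists_eq_add_of_lt hk
      have := hpos (n + 1) (by omega) (by omega)
      rw [U_real_cos_eq_div hsin.ne'] at this
      push_cast at this ⊢
      ring_nf at this ⊢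
      exact (div_pos_iff_of_pos_right hsin).mp this
  · push_cast at hone ⊢
    rw [div_eq_one_iff_eq hsin.ne'] at hone
    linarith

theorem U_eval_eq_one_and_pos_iff (m : ℕ) (c : ℝ) :
    ((U ℝ (m + 1 : ℕ)).eval c = 1 ∧ ∀ n : ℕ, 1 ≤ n → n ≤ m → 0 < (U ℝ n).eval c) ↔
      c = cos (π / (m + 3)) := by
  refine ⟨fun ⟨hone, hpos⟩ => eq_cos_pi_div_of_U_eval hone hpos, ?_⟩
  · rintro rfl
    have hm3 : (0 : ℝ) < m + 3 := by positivity
    have hθ0 : 0 < π / (m + 3) := div_pos pi_pos hm3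
    have hsin : 0 < sin (π / (m + 3)) :=
      sin_pos_of_pos_of_lt_pi hθ0 (div_lt_self pi_pos (by linarith))
    refine ⟨?_, fun n hn hnm => ?_⟩
    · rw [U_real_cos_eq_div hsin.ne', div_eq_one_iff_eq hsin.ne', ← sin_pi_sub]
      congr 1
      field_simp
      push_cast
      ring
    · rw [U_real_cos_eq_div hsin.ne']
      refine div_pos (sin_pos_of_pos_of_lt_pi (by positivity) ?_) hsin
      rw [mul_div_assoc', div_lt_iff₀ hm3]
      have : (n : ℝ) ≤ m := by exact_mod_cast hnm
      push_cast
      nlinarith [pi_pos]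

section Frieze

variable {x y c : ℝ}

theorem px_add_two (x y : ℝ) (n : ℕ) : px x y (n + 2) = x * py x y (n + 1) - px x y n := rfl

theorem py_add_two (x y : ℝ) (n : ℕ) : py x y (n + 2) = y * px x y (n + 1) - py x y n := rfl

theorem px_py_eq_U_eval (hc : c ≠ 0) (hxy : x * y = (2 * c) ^ 2) (m : ℕ) :
    px x y (2 * m) = (U ℝ (2 * m : ℕ)).eval c ∧ py x y (2 * m) = (U ℝ (2 * m : ℕ)).eval c ∧
      2 * c * px x y (2 * m + 1) = x * (U ℝ (2 * m + 1 : ℕ)).eval c ∧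
      2 * c * py x y (2 * m + 1) = y * (U ℝ (2 * m + 1 : ℕ)).eval c := by
  induction m with
  | zero => norm_num [px, py, tc, U_one]; constructor <;> ring
  | succ m ih =>
    obtain ⟨hx0, hy0, hx1, hy1⟩ := ih
    have h2c : 2 * c ≠ 0 := mul_ne_zero two_ne_zero hc
    rw [show 2 * (m + 1) = 2 * m + 2 by ring]
    have hx2 : px x y (2 * m + 2) = (U ℝ (2 * m + 2 : ℕ)).eval c := by
      refine mul_left_cancel₀ h2c ?_
      rw [px_add_two, U_eval_nat_add_two]
      linear_combination x * hy1 + (U ℝ (2 * m + 1 : ℕ)).eval c * hxy - 2 * c * hx0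
    have hy2 : py x y (2 * m + 2) = (U ℝ (2 * m + 2 : ℕ)).eval c := by
      refine mul_left_cancel₀ h2c ?_
      rw [py_add_two, U_eval_nat_add_two]
      linear_combination y * hx1 + (U ℝ (2 * m + 1 : ℕ)).eval c * hxy - 2 * c * hy0
    rw [show 2 * m + 2 + 1 = 2 * m + 1 + 2 by ring]
    refine ⟨hx2, hy2, ?_, ?_⟩
    · rw [px_add_two, U_eval_nat_add_two]
      linear_combination 2 * c * x * hy2 - hx1
    · rw [py_add_two, U_eval_nat_add_two]
      linear_combination 2 * c * y * hx2 - hy1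

theorem px_py_eq_U_eval_of_even (hc : c ≠ 0) (hxy : x * y = (2 * c) ^ 2) {n : ℕ} (hn : Even n) :
    px x y n = (U ℝ n).eval c ∧ py x y n = (U ℝ n).eval c := by
  obtain ⟨m, rfl⟩ := even_iff_two_dvd.mp hn
  exact ⟨(px_py_eq_U_eval hc hxy m).1, (px_py_eq_U_eval hc hxy m).2.1⟩

theorem px_py_eq_U_eval_of_odd (hc : c ≠ 0) (hxy : x * y = (2 * c) ^ 2) {n : ℕ} (hn : Odd n) :
    2 * c * px x y n = x * (U ℝ n).eval c ∧ 2 * c * py x y n = y * (U ℝ n).eval c := by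
  obtain ⟨m, rfl⟩ := hn
  exact (px_py_eq_U_eval hc hxy m).2.2

theorem px_pos_and_py_pos_iff (hx : 0 < x) (hy : 0 < y) (hc : 0 < c)
    (hxy : x * y = (2 * c) ^ 2) (n : ℕ) :
    0 < px x y n ∧ 0 < py x y n ↔ 0 < (U ℝ n).eval c := by
  rcases n.even_or_odd with hn | hn
  · obtain ⟨hpx, hpy⟩ := px_py_eq_U_eval_of_even hc.ne' hxy hn
    rw [hpx, hpy, and_self]
  · obtain ⟨hpx, hpy⟩ := px_py_eq_U_eval_of_odd hc.ne' hxy hn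
    have h2c : 0 < 2 * c := by positivity
    rw [← mul_pos_iff_of_pos_left h2c, hpx, ← mul_pos_iff_of_pos_left h2c (b := py x y n), hpy,
      mul_pos_iff_of_pos_left hx, mul_pos_iff_of_pos_left hy, and_self]

theorem frieze_conditions_iff_U_eval (hx : 0 < x) (hy : 0 < y) (hc : 0 < c) (hxy : x * y = (2 * c) ^ 2)
    {m : ℕ} (hm : Odd m) :
    (px x y (m + 1) = 1 ∧ py x y (m + 1) = 1 ∧
        ∀ n, 1 ≤ n → n ≤ m → 0 < px x y n ∧ 0 < py x y n) ↔
      ((U ℝ (m + 1 : ℕ)).eval c = 1 ∧ ∀ n : ℕ, 1 ≤ n → n ≤ m → 0 < (U ℝ n).eval c) := by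
  obtain ⟨hpx, hpy⟩ := px_py_eq_U_eval_of_even hc.ne' hxy hm.add_one
  simp only [hpx, hpy, px_pos_and_py_pos_iff hx hy hc hxy, and_self_left]

end Frieze

theorem qint_add_one_eq_U_eval_cos {h : ℕ} (hh : 2 ≤ h) (n : ℕ) :
    qint h (n + 1) = (U ℝ n).eval (cos (π / h)) := by
  have hsin : 0 < sin (π / h) :=
    sin_pos_of_pos_of_lt_pi (by positivity) (div_lt_self pi_pos (by exact_mod_cast hh))
  rw [qint, U_real_cos_eq_div hsin.ne']
  push_cast
  ring_nf

/-- For `w` odd and `x, y > 0`, the frieze conditions `p^x_{w+1} = p^y_{w+1} = 1` with all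
intermediate values positive hold if and only if `xy = (2cos(π/(w+3)))²`; and in that case
`p^x_n = [n+1]_h` (`= p^y_n`) for `n` even and `p^x_n = x·[n+1]_h/[2]_h`,
`p^y_n = y·[n+1]_h/[2]_h` for `n` odd, where `h = w+3`. -/
theorem typeA_odd_classification (w : ℕ) (hw : Odd w)
    (x y : ℝ) (hx : 0 < x) (hy : 0 < y) :
    ((px x y (w + 1) = 1 ∧ py x y (w + 1) = 1 ∧
        ∀ n, 1 ≤ n → n ≤ w → 0 < px x y n ∧ 0 < py x y n) ↔
      x * y = (2 * cos (π / (w + 3))) ^ 2) ∧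
    (x * y = (2 * cos (π / (w + 3))) ^ 2 →
      ∀ n : ℕ,
        (Even n → px x y n = qint (w + 3) (n + 1) ∧ py x y n = qint (w + 3) (n + 1)) ∧
        (Odd n → px x y n = x * qint (w + 3) (n + 1) / qint (w + 3) 2 ∧
                 py x y n = y * qint (w + 3) (n + 1) / qint (w + 3) 2)) := by
  have hcos : 0 < cos (π / (w + 3)) := by
    have hθ : 0 < π / (w + 3) := by positivity
    refine cos_pos_of_mem_Ioo ⟨by linarith [pi_pos], ?_⟩
    exact div_lt_div_of_pos_left pi_pos two_pos (by linarith [(Nat.cast_nonneg w : (0 : ℝ) ≤ w)])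
  refine ⟨?_, fun hxy n => ?_⟩
  · obtain ⟨c, hc, hxy⟩ : ∃ c, 0 < c ∧ x * y = (2 * c) ^ 2 :=
      ⟨√(x * y) / 2, by positivity, by rw [mul_div_cancel₀ _ two_ne_zero, sq_sqrt (by positivity)]⟩
    rw [frieze_conditions_iff_U_eval hx hy hc hxy hw, U_eval_eq_one_and_pos_iff, hxy,
      pow_left_inj₀ (by positivity) (by positivity) two_ne_zero, mul_right_inj' two_ne_zero]
  · have hq (k : ℕ) : qint (w + 3) (k + 1) = (U ℝ k).eval (cos (π / (w + 3))) := by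
      exact_mod_cast qint_add_one_eq_U_eval_cos (by omega : 2 ≤ w + 3) k
    have hq2 : qint (w + 3) 2 = 2 * cos (π / (w + 3)) := by simpa [U_one] using hq 1
    rw [hq, hq2]
    refine ⟨px_py_eq_U_eval_of_even hcos.ne' hxy, fun hn => ?_⟩
    obtain ⟨hpx, hpy⟩ := px_py_eq_U_eval_of_odd hcos.ne' hxy hn
    constructor <;> rw [eq_div_iff (by positivity)] <;> linarith
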